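/- Let n,m ≥ 1 and let u : {0,1}ⁿ × {0,1}ᵐ → ℝ be such that the two-team game has no pure Nash equilibrium: for every corner (x,y), either there exists i with u(x,y) < u(x̄ⁱ,y) or there exists j with u(x,y) > u(x,ȳʲ). Then there exists γ ∈ (0,1/2) such that for every solution (p(t),q(t)) of the Red Queen dynamics defined for all t ≥ 0 with values in (0,1)^{n+m}, and every time t at which (p(t),q(t)) is γ-near some corner, there exists a finite time t' > t at which (p(t'),q(t')) is γ-far from every corner. -/

import Mathlib

open MeasureTheory

noncomputable section

/-- `p_{i,b}`: the probability that gene `i` takes allele `b`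
(`b = false ↦ pᵢ`, `b = true ↦ 1 − pᵢ`). -/
def coord {n : ℕ} (p : Fin n → ℝ) (i : Fin n) (b : Bool) : ℝ :=
  if b then 1 - p i else p i

/-- `x` with its `i`-th bit flipped. -/
def bflip {n : ℕ} (x : Fin n → Bool) (i : Fin n) : Fin n → Bool :=
  Function.update x i (!x i)

/-- `K_{A,i}(x,y,p,q) = Π_{i'≠i} p_{i',x_{i'}} Π_j q_{j,y_j}`. -/
def KA {n m : ℕ} (p : Fin n → ℝ) (q : Fin m → ℝ) (i : Fin n)
    (x : Fin n → Bool) (y : Fin m → Bool) : ℝ :=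
  (∏ i' ∈ Finset.univ.erase i, coord p i' (x i')) * ∏ j, coord q j (y j)

/-- `K_{B,j}(x,y,p,q) = Π_i p_{i,x_i} Π_{j'≠j} q_{j',y_{j'}}`. -/
def KB {n m : ℕ} (p : Fin n → ℝ) (q : Fin m → ℝ) (j : Fin m)
    (x : Fin n → Bool) (y : Fin m → Bool) : ℝ :=
  (∏ i, coord p i (x i)) * ∏ j' ∈ Finset.univ.erase j, coord q j' (y j')

/-- The average payoff `û(p,q) = Σ_{x,y} P(x,y) u(x,y)` where
`P(x,y) = Π_i p_{i,x_i} Π_j q_{j,y_j}`. -/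
def uhat {n m : ℕ} (u : (Fin n → Bool) → (Fin m → Bool) → ℝ)
    (p : Fin n → ℝ) (q : Fin m → ℝ) : ℝ :=
  ∑ x : Fin n → Bool, ∑ y : Fin m → Bool,
    ((∏ i, coord p i (x i)) * ∏ j, coord q j (y j)) * u x y

/-- The average payoff conditioned on `xᵢ = b`:
`û_{i,b}(p,q) = Σ_{x : x_i = b} Σ_y K_{A,i}(x,y,p,q) u(x,y)`. -/
def uhatA {n m : ℕ} (u : (Fin n → Bool) → (Fin m → Bool) → ℝ)
    (p : Fin n → ℝ) (q : Fin m → ℝ) (i : Fin n) (b : Bool) : ℝ :=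
  ∑ x : Fin n → Bool, ∑ y : Fin m → Bool,
    if x i = b then KA p q i x y * u x y else 0

/-- The average payoff conditioned on `yⱼ = b`:
`û_{j,b}(p,q) = Σ_x Σ_{y : y_j = b} K_{B,j}(x,y,p,q) u(x,y)`. -/
def uhatB {n m : ℕ} (u : (Fin n → Bool) → (Fin m → Bool) → ℝ)
    (p : Fin n → ℝ) (q : Fin m → ℝ) (j : Fin m) (b : Bool) : ℝ :=
  ∑ x : Fin n → Bool, ∑ y : Fin m → Bool,
    if y j = b then KB p q j x y * u x y else 0

/-- `(p,q)` is a solution of the Red Queen dynamics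
`ṗᵢ = pᵢ(û_{i,0}(p,q) − û(p,q))`, `q̇ⱼ = −qⱼ(û_{j,0}(p,q) − û(p,q))`
for all times `t ≥ 0`. -/
def RQSolution {n m : ℕ} (u : (Fin n → Bool) → (Fin m → Bool) → ℝ)
    (p : ℝ → Fin n → ℝ) (q : ℝ → Fin m → ℝ) : Prop :=
  (∀ t, 0 ≤ t → ∀ i, HasDerivAt (fun s => p s i)
      (p t i * (uhatA u (p t) (q t) i false - uhat u (p t) (q t))) t) ∧
  (∀ t, 0 ≤ t → ∀ j, HasDerivAt (fun s => q s j)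
      (-(q t j * (uhatB u (p t) (q t) j false - uhat u (p t) (q t)))) t)

/-- `(p,q)` takes values in the open cube `(0,1)^{n+m}` at all times `t ≥ 0`. -/
def InteriorValues {n m : ℕ} (p : ℝ → Fin n → ℝ) (q : ℝ → Fin m → ℝ) : Prop :=
  ∀ t, 0 ≤ t → (∀ i, p t i ∈ Set.Ioo (0:ℝ) 1) ∧ (∀ j, q t j ∈ Set.Ioo (0:ℝ) 1)

/-- Binary Shannon entropy. -/
def binEnt (s : ℝ) : ℝ := -(s * Real.log s) - (1 - s) * Real.log (1 - s)

/-- The entropy `H(p) = Σᵢ h(pᵢ)` of a population. -/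
def ent {n : ℕ} (p : Fin n → ℝ) : ℝ := ∑ i, binEnt (p i)

/-- The state `(p,q)` is `γ`-near the corner `(x,y)`:
`p_{i,xᵢ} > 1 − γ` for all `i` and `q_{j,yⱼ} > 1 − γ` for all `j`. -/
def Near {n m : ℕ} (γ : ℝ) (x : Fin n → Bool) (y : Fin m → Bool)
    (p : Fin n → ℝ) (q : Fin m → ℝ) : Prop :=
  (∀ i, 1 - γ < coord p i (x i)) ∧ (∀ j, 1 - γ < coord q j (y j))

lemma coord_mem {n : ℕ} {p : Fin n → ℝ} {i : Fin n} (h : p i ∈ Set.Icc (0:ℝ) 1) (b : Bool) :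
    coord p i b ∈ Set.Icc (0:ℝ) 1 := by
  obtain ⟨h1, h2⟩ := h
  cases b <;> simp [coord] <;> constructor <;> linarith

lemma coord_Ioo {n : ℕ} {p : Fin n → ℝ} {i : Fin n} (h : p i ∈ Set.Ioo (0:ℝ) 1) (b : Bool) :
    coord p i b ∈ Set.Ioo (0:ℝ) 1 := by
  obtain ⟨h1, h2⟩ := h
  cases b <;> simp [coord] <;> constructor <;> linarith

lemma coord_add_not {n : ℕ} (p : Fin n → ℝ) (i : Fin n) (b : Bool) :
    coord p i b + coord p i (!b) = 1 := by
  cases b <;> simp [coord] <;> ring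

lemma sum_prod_coord {n : ℕ} (p : Fin n → ℝ) :
    ∑ x : Fin n → Bool, ∏ i, coord p i (x i) = 1 := by
  have h := Finset.prod_univ_sum (fun _ : Fin n => (Finset.univ : Finset Bool))
    (fun i b => coord p i b)
  rw [Fintype.piFinset_univ] at h
  rw [← h]
  have h2 : ∀ i : Fin n, ∑ b : Bool, coord p i b = 1 := by
    intro i; rw [Fintype.sum_bool]; simp [coord]
  rw [Finset.prod_congr rfl (fun i _ => h2 i)]
  simp

lemma uhat_close {n m : ℕ} (u : (Fin n → Bool) → (Fin m → Bool) → ℝ)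
    (p : Fin n → ℝ) (q : Fin m → ℝ)
    (hp : ∀ i, p i ∈ Set.Icc (0:ℝ) 1) (hq : ∀ j, q j ∈ Set.Icc (0:ℝ) 1)
    {M : ℝ} (hM : ∀ x y, |u x y| ≤ M)
    {γ : ℝ} (hγ0 : 0 ≤ γ) (hγ1 : γ ≤ 1)
    (x₀ : Fin n → Bool) (y₀ : Fin m → Bool)
    (hx : ∀ i, 1 - γ ≤ coord p i (x₀ i)) (hy : ∀ j, 1 - γ ≤ coord q j (y₀ j)) :
    |uhat u p q - u x₀ y₀| ≤ 2 * M * ((n + m) * γ) := by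
  have hM0 : 0 ≤ M := le_trans (abs_nonneg _) (hM x₀ y₀)
  set W : ((Fin n → Bool) × (Fin m → Bool)) → ℝ :=
    fun z => (∏ i, coord p i (z.1 i)) * ∏ j, coord q j (z.2 j) with hW
  have hWnn : ∀ z, 0 ≤ W z := by
    intro z
    refine mul_nonneg (Finset.prod_nonneg fun k _ => (coord_mem (hp k) _).1)
      (Finset.prod_nonneg fun k _ => (coord_mem (hq k) _).1)
  have hWsum : ∑ z, W z = 1 := by
    rw [Fintype.sum_prod_type]
    have h1 : ∀ x : Fin n → Bool, ∑ y : Fin m → Bool, W (x, y)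
        = (∏ i, coord p i (x i)) * ∑ y : Fin m → Bool, ∏ j, coord q j (y j) := by
      intro x; rw [Finset.mul_sum]
    rw [Finset.sum_congr rfl (fun x _ => h1 x), sum_prod_coord q]
    simpa using sum_prod_coord p
  have huhat : uhat u p q = ∑ z : (Fin n → Bool) × (Fin m → Bool), W z * u z.1 z.2 := by
    rw [Fintype.sum_prod_type]; rfl
  set z₀ : (Fin n → Bool) × (Fin m → Bool) := (x₀, y₀) with hz₀
  have key : uhat u p q - u x₀ y₀ = ∑ z, W z * (u z.1 z.2 - u x₀ y₀) := by
    rw [huhat]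
    have h2 : ∑ z, W z * (u z.1 z.2 - u x₀ y₀)
        = ∑ z, W z * u z.1 z.2 - (∑ z, W z) * u x₀ y₀ := by
      rw [Finset.sum_mul, ← Finset.sum_sub_distrib]
      exact Finset.sum_congr rfl (fun z _ => by ring)
    rw [h2, hWsum, one_mul]
  rw [key]
  have habs : |∑ z, W z * (u z.1 z.2 - u x₀ y₀)| ≤ ∑ z, W z * |u z.1 z.2 - u x₀ y₀| := by
    refine (Finset.abs_sum_le_sum_abs _ _).trans (Finset.sum_le_sum fun z _ => ?_)
    rw [abs_mul, abs_of_nonneg (hWnn z)]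
  refine habs.trans ?_
  have hsplit := Finset.sum_erase_add Finset.univ
      (fun z : (Fin n → Bool) × (Fin m → Bool) => W z * |u z.1 z.2 - u x₀ y₀|)
      (Finset.mem_univ z₀)
  have hWsplit := Finset.sum_erase_add Finset.univ W (Finset.mem_univ z₀)
  have hz₀term : W z₀ * |u z₀.1 z₀.2 - u x₀ y₀| = 0 := by
    simp [hz₀]
  -- bound on erased sum
  have herased : ∑ z ∈ Finset.univ.erase z₀, W z * |u z.1 z.2 - u x₀ y₀|
      ≤ ∑ z ∈ Finset.univ.erase z₀, W z * (2 * M) := by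
    refine Finset.sum_le_sum fun z _ => ?_
    refine mul_le_mul_of_nonneg_left ?_ (hWnn z)
    calc |u z.1 z.2 - u x₀ y₀| ≤ |u z.1 z.2| + |u x₀ y₀| := abs_sub _ _
    _ ≤ 2 * M := by linarith [hM z.1 z.2, hM x₀ y₀]
  -- W z₀ is large
  have hWz₀ : 1 - (n + m : ℝ) * γ ≤ W z₀ := by
    have hγ' : (0:ℝ) ≤ 1 - γ := by linarith
    have h1 : ((1:ℝ) - γ) ^ n ≤ ∏ i, coord p i (x₀ i) := by
      calc ((1:ℝ) - γ) ^ n = ∏ _i : Fin n, (1 - γ) := by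
            rw [Finset.prod_const, Finset.card_univ, Fintype.card_fin]
      _ ≤ _ := Finset.prod_le_prod (fun _ _ => hγ') (fun i _ => hx i)
    have h2 : ((1:ℝ) - γ) ^ m ≤ ∏ j, coord q j (y₀ j) := by
      calc ((1:ℝ) - γ) ^ m = ∏ _j : Fin m, (1 - γ) := by
            rw [Finset.prod_const, Finset.card_univ, Fintype.card_fin]
      _ ≤ _ := Finset.prod_le_prod (fun _ _ => hγ') (fun j _ => hy j)
    have h3 : ((1:ℝ) - γ) ^ (n + m) ≤ W z₀ := by
      rw [pow_add]
      exact mul_le_mul h1 h2 (pow_nonneg hγ' m)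
        (Finset.prod_nonneg fun k _ => (coord_mem (hp k) _).1)
    have h4 : 1 - (n + m : ℝ) * γ ≤ ((1:ℝ) - γ) ^ (n + m) := by
      have h5 := one_add_mul_le_pow (show (-2:ℝ) ≤ -γ by linarith) (n + m)
      have h6 : (1:ℝ) + -γ = 1 - γ := by ring
      rw [h6] at h5
      push_cast at h5 ⊢
      linarith
    linarith
  have hWle1 : W z₀ ≤ 1 := by
    have := Finset.sum_nonneg (fun z (_ : z ∈ Finset.univ.erase z₀) => hWnn z)
    linarith [hWsplit]
  calc ∑ z, W z * |u z.1 z.2 - u x₀ y₀|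
      = ∑ z ∈ Finset.univ.erase z₀, W z * |u z.1 z.2 - u x₀ y₀| := by
        rw [← hsplit]
        show _ + W z₀ * |u z₀.1 z₀.2 - u x₀ y₀| = _
        rw [hz₀term, add_zero]
    _ ≤ ∑ z ∈ Finset.univ.erase z₀, W z * (2 * M) := herased
    _ = (1 - W z₀) * (2 * M) := by rw [← Finset.sum_mul]; rw [show ∑ z ∈ Finset.univ.erase z₀, W z = 1 - W z₀ by linarith [hWsplit, hWsum]]
    _ ≤ 2 * M * ((n + m) * γ) := by nlinarith

lemma uhatA_eq {n m : ℕ} (u : (Fin n → Bool) → (Fin m → Bool) → ℝ)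
    (p : Fin n → ℝ) (q : Fin m → ℝ) (i : Fin n) (b : Bool) :
    uhatA u p q i b = uhat u (Function.update p i (bif b then 0 else 1)) q := by
  unfold uhatA uhat
  refine Finset.sum_congr rfl fun x _ => Finset.sum_congr rfl fun y _ => ?_
  set p' := Function.update p i (bif b then (0:ℝ) else 1) with hp'
  have herase : ∏ i' ∈ Finset.univ.erase i, coord p' i' (x i')
      = ∏ i' ∈ Finset.univ.erase i, coord p i' (x i') := by
    refine Finset.prod_congr rfl fun i' hi' => ?_
    have hne : i' ≠ i := (Finset.mem_erase.1 hi').1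
    simp [coord, hp', Function.update_of_ne hne]
  have hfull : (∏ i', coord p' i' (x i'))
      = coord p' i (x i) * ∏ i' ∈ Finset.univ.erase i, coord p i' (x i') := by
    rw [← Finset.mul_prod_erase Finset.univ _ (Finset.mem_univ i), herase]
  have hcoord : coord p' i (x i) = if x i = b then 1 else 0 := by
    cases hb : b <;> cases hx : x i <;>
      simp [coord, hp', Function.update_self, hx, hb]
  rw [hfull, hcoord]
  by_cases h : x i = b <;> simp [h, KA] <;> ring

lemma uhatB_eq {n m : ℕ} (u : (Fin n → Bool) → (Fin m → Bool) → ℝ)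
    (p : Fin n → ℝ) (q : Fin m → ℝ) (j : Fin m) (b : Bool) :
    uhatB u p q j b = uhat u p (Function.update q j (bif b then 0 else 1)) := by
  unfold uhatB uhat
  refine Finset.sum_congr rfl fun x _ => Finset.sum_congr rfl fun y _ => ?_
  set q' := Function.update q j (bif b then (0:ℝ) else 1) with hq'
  have herase : ∏ j' ∈ Finset.univ.erase j, coord q' j' (y j')
      = ∏ j' ∈ Finset.univ.erase j, coord q j' (y j') := by
    refine Finset.prod_congr rfl fun j' hj' => ?_
    have hne : j' ≠ j := (Finset.mem_erase.1 hj').1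
    simp [coord, hq', Function.update_of_ne hne]
  have hfull : (∏ j', coord q' j' (y j'))
      = coord q' j (y j) * ∏ j' ∈ Finset.univ.erase j, coord q j' (y j') := by
    rw [← Finset.mul_prod_erase Finset.univ _ (Finset.mem_univ j), herase]
  have hcoord : coord q' j (y j) = if y j = b then 1 else 0 := by
    cases hb : b <;> cases hy : y j <;>
      simp [coord, hq', Function.update_self, hy, hb]
  rw [hfull, hcoord]
  by_cases h : y j = b <;> simp [h, KB] <;> ring

lemma uhat_split_p {n m : ℕ} (u : (Fin n → Bool) → (Fin m → Bool) → ℝ)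
    (p : Fin n → ℝ) (q : Fin m → ℝ) (i : Fin n) :
    uhat u p q = p i * uhatA u p q i false + (1 - p i) * uhatA u p q i true := by
  unfold uhat uhatA
  rw [Finset.mul_sum, Finset.mul_sum, ← Finset.sum_add_distrib]
  refine Finset.sum_congr rfl fun x _ => ?_
  rw [Finset.mul_sum, Finset.mul_sum, ← Finset.sum_add_distrib]
  refine Finset.sum_congr rfl fun y _ => ?_
  have hfull : (∏ i', coord p i' (x i'))
      = coord p i (x i) * ∏ i' ∈ Finset.univ.erase i, coord p i' (x i') :=
    (Finset.mul_prod_erase Finset.univ _ (Finset.mem_univ i)).symm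
  rw [hfull]
  cases hx : x i <;> simp [coord, KA] <;> ring

lemma uhat_split_q {n m : ℕ} (u : (Fin n → Bool) → (Fin m → Bool) → ℝ)
    (p : Fin n → ℝ) (q : Fin m → ℝ) (j : Fin m) :
    uhat u p q = q j * uhatB u p q j false + (1 - q j) * uhatB u p q j true := by
  unfold uhat uhatB
  rw [Finset.mul_sum, Finset.mul_sum, ← Finset.sum_add_distrib]
  refine Finset.sum_congr rfl fun x _ => ?_
  rw [Finset.mul_sum, Finset.mul_sum, ← Finset.sum_add_distrib]
  refine Finset.sum_congr rfl fun y _ => ?_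
  have hfull : (∏ j', coord q j' (y j'))
      = coord q j (y j) * ∏ j' ∈ Finset.univ.erase j, coord q j' (y j') :=
    (Finset.mul_prod_erase Finset.univ _ (Finset.mem_univ j)).symm
  rw [hfull]
  cases hy : y j <;> simp [coord, KB] <;> ring

lemma grow {s d : ℝ → ℝ} {c t₀ : ℝ} (hc : 0 < c)
    (hd : ∀ t, t₀ ≤ t → HasDerivAt s (d t) t)
    (hcd : ∀ t, t₀ ≤ t → c * s t ≤ d t)
    (h0 : 0 < s t₀) (hb : ∀ t, t₀ ≤ t → s t < 1) : False := by
  set g : ℝ → ℝ := fun t => s t * Real.exp (-(c * t)) with hg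
  have hgd : ∀ t, t₀ ≤ t → HasDerivAt g ((d t - c * s t) * Real.exp (-(c * t))) t := by
    intro t ht
    have h1 : HasDerivAt (fun t : ℝ => -(c * t)) (-c) t := by
      exact ((hasDerivAt_id t).const_mul c).neg.congr_deriv (by simp)
    have h2 := h1.exp
    have h3 := (hd t ht).mul h2
    exact h3.congr_deriv (by ring)
  have hmono : MonotoneOn g (Set.Ici t₀) := by
    apply monotoneOn_of_deriv_nonneg (convex_Ici t₀)
    · intro t ht
      exact (hgd t ht).continuousAt.continuousWithinAt
    · intro t ht
      rw [interior_Ici] at ht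
      exact (hgd t (le_of_lt ht)).differentiableAt.differentiableWithinAt
    · intro t ht
      rw [interior_Ici] at ht
      rw [(hgd t (le_of_lt ht)).deriv]
      have h4 := hcd t (le_of_lt ht)
      have h5 := (Real.exp_pos (-(c * t))).le
      nlinarith
  set T := t₀ + 1 / (c * s t₀) with hT
  have hcs : 0 < c * s t₀ := mul_pos hc h0
  have hT0 : t₀ ≤ T := by
    have h7 : 0 < 1 / (c * s t₀) := by positivity
    rw [hT]
    linarith
  have hgT : g t₀ ≤ g T := hmono Set.self_mem_Ici hT0 hT0
  have e1 : Real.exp (-(c * t₀)) = Real.exp (c * (T - t₀)) * Real.exp (-(c * T)) := by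
    rw [← Real.exp_add]; ring_nf
  have hgT' : s t₀ * Real.exp (c * (T - t₀)) ≤ s T := by
    have hE := Real.exp_pos (-(c * T))
    rw [hg] at hgT
    simp only at hgT
    rw [e1] at hgT
    nlinarith [hgT]
  have e2 : c * (T - t₀) = 1 / s t₀ := by
    rw [hT]
    field_simp
    ring
  rw [e2] at hgT'
  have e3 : 1 / s t₀ < Real.exp (1 / s t₀) := by
    have := Real.add_one_le_exp (1 / s t₀)
    linarith
  have hsT : 1 < s T := by
    have h6 : s t₀ * (1 / s t₀) < s t₀ * Real.exp (1 / s t₀) :=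
      (mul_lt_mul_iff_right₀ h0).2 e3
    rw [mul_one_div, div_self (ne_of_gt h0)] at h6
    linarith
  exact absurd (hb T hT0) (not_lt.2 hsT.le)

lemma update_mem_Icc {n : ℕ} {p : Fin n → ℝ} (hp : ∀ i', p i' ∈ Set.Ioo (0:ℝ) 1)
    (i : Fin n) {v : ℝ} (hv : v ∈ Set.Icc (0:ℝ) 1) :
    ∀ i', Function.update p i v i' ∈ Set.Icc (0:ℝ) 1 := by
  intro i'
  rcases eq_or_ne i' i with rfl | h
  · rwa [Function.update_self]
  · rw [Function.update_of_ne h]; exact ⟨(hp i').1.le, (hp i').2.le⟩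

lemma uhatA_close {n m : ℕ} (u : (Fin n → Bool) → (Fin m → Bool) → ℝ)
    {p : Fin n → ℝ} {q : Fin m → ℝ}
    (hp : ∀ i', p i' ∈ Set.Ioo (0:ℝ) 1) (hq : ∀ j, q j ∈ Set.Ioo (0:ℝ) 1)
    {M : ℝ} (hM : ∀ x y, |u x y| ≤ M)
    {γ : ℝ} (hγ0 : 0 ≤ γ) (hγ1 : γ ≤ 1)
    {x : Fin n → Bool} {y : Fin m → Bool}
    (hx : ∀ i', 1 - γ < coord p i' (x i')) (hy : ∀ j, 1 - γ < coord q j (y j))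
    (i : Fin n) (c : Bool) :
    |uhatA u p q i c - u (Function.update x i c) y| ≤ 2 * M * ((n + m) * γ) := by
  rw [uhatA_eq]
  refine uhat_close u _ q
    (update_mem_Icc hp i (by cases c <;> norm_num))
    (fun j => ⟨(hq j).1.le, (hq j).2.le⟩) hM hγ0 hγ1 _ y ?_ (fun j => (hy j).le)
  intro i'
  rcases eq_or_ne i' i with rfl | hne
  · rw [Function.update_self]
    cases c <;> simp [coord, Function.update_self] <;> linarith
  · rw [Function.update_of_ne hne]
    have hcc : coord (Function.update p i (bif c then 0 else 1)) i' (x i')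
        = coord p i' (x i') := by
      simp [coord, Function.update_of_ne hne]
    rw [hcc]
    exact (hx i').le

lemma uhatB_close {n m : ℕ} (u : (Fin n → Bool) → (Fin m → Bool) → ℝ)
    {p : Fin n → ℝ} {q : Fin m → ℝ}
    (hp : ∀ i', p i' ∈ Set.Ioo (0:ℝ) 1) (hq : ∀ j, q j ∈ Set.Ioo (0:ℝ) 1)
    {M : ℝ} (hM : ∀ x y, |u x y| ≤ M)
    {γ : ℝ} (hγ0 : 0 ≤ γ) (hγ1 : γ ≤ 1)
    {x : Fin n → Bool} {y : Fin m → Bool}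
    (hx : ∀ i', 1 - γ < coord p i' (x i')) (hy : ∀ j, 1 - γ < coord q j (y j))
    (j : Fin m) (c : Bool) :
    |uhatB u p q j c - u x (Function.update y j c)| ≤ 2 * M * ((n + m) * γ) := by
  rw [uhatB_eq]
  refine uhat_close u p _
    (fun i => ⟨(hp i).1.le, (hp i).2.le⟩)
    (update_mem_Icc hq j (by cases c <;> norm_num))
    hM hγ0 hγ1 x _ (fun i => (hx i).le) ?_
  intro j'
  rcases eq_or_ne j' j with rfl | hne
  · rw [Function.update_self]
    cases c <;> simp [coord, Function.update_self] <;> linarith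
  · rw [Function.update_of_ne hne]
    have hcc : coord (Function.update q j (bif c then 0 else 1)) j' (y j')
        = coord q j' (y j') := by
      simp [coord, Function.update_of_ne hne]
    rw [hcc]
    exact (hy j').le

lemma sign_const {t₀ : ℝ} {f : ℝ → ℝ} (hc : ContinuousOn f (Set.Ici t₀))
    (hne : ∀ t, t₀ ≤ t → f t ≠ 1/2) :
    ∀ t, t₀ ≤ t → (1/2 < f t ↔ 1/2 < f t₀) := by
  intro t ht
  constructor
  · intro h1
    by_contra h2
    push_neg at h2
    have h2' : f t₀ < 1/2 := lt_of_le_of_ne h2 (hne t₀ le_rfl)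
    have hcont : ContinuousOn f (Set.Icc t₀ t) := hc.mono (fun s hs => hs.1)
    obtain ⟨t', ht', hval⟩ := intermediate_value_Icc ht hcont
      (Set.mem_Icc.2 ⟨h2'.le, h1.le⟩)
    exact hne t' ht'.1 hval
  · intro h1
    by_contra h2
    push_neg at h2
    have h2' : f t < 1/2 := lt_of_le_of_ne h2 (hne t ht)
    have hcont : ContinuousOn f (Set.Icc t₀ t) := hc.mono (fun s hs => hs.1)
    obtain ⟨t', ht', hval⟩ := intermediate_value_Icc' ht hcont
      (Set.mem_Icc.2 ⟨h2'.le, h1.le⟩)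
    exact hne t' ht'.1 hval

set_option maxHeartbeats 1600000 in
/-- (Claim 4.3 of the paper.) If the two-team game has no
pure Nash equilibrium, then there is `γ ∈ (0,1/2)` such that along any Red
Queen trajectory with values in `(0,1)^{n+m}`, whenever the state is `γ`-near
some corner at a time `t ≥ 0`, there is a finite later time `t' > t` at which
the state is `γ`-far from every corner. -/
theorem stmt13 {n m : ℕ} (hn : 1 ≤ n) (hm : 1 ≤ m)
    (u : (Fin n → Bool) → (Fin m → Bool) → ℝ)
    (hNoNash : ∀ (x : Fin n → Bool) (y : Fin m → Bool),
      (∃ i, u x y < u (bflip x i) y) ∨ (∃ j, u x (bflip y j) < u x y)) :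
    ∃ γ ∈ Set.Ioo (0:ℝ) (1/2),
      ∀ (p : ℝ → Fin n → ℝ) (q : ℝ → Fin m → ℝ),
        RQSolution u p q → InteriorValues p q →
        ∀ t, 0 ≤ t →
        (∃ (x : Fin n → Bool) (y : Fin m → Bool), Near γ x y (p t) (q t)) →
        ∃ t' > t, ∀ (x : Fin n → Bool) (y : Fin m → Bool),
          ¬ Near γ x y (p t') (q t') := by
  classical
  have key : ∀ (x : Fin n → Bool) (y : Fin m → Bool), ∃ e : ℝ, 0 < e ∧
      ((∃ i, u x y + e ≤ u (bflip x i) y) ∨ (∃ j, u x (bflip y j) + e ≤ u x y)) := by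
    intro x y
    rcases hNoNash x y with ⟨i, hi⟩ | ⟨j, hj⟩
    · exact ⟨u (bflip x i) y - u x y, by linarith, Or.inl ⟨i, by linarith⟩⟩
    · exact ⟨u x y - u x (bflip y j), by linarith, Or.inr ⟨j, by linarith⟩⟩
  choose e he hprop using key
  obtain ⟨M, hM⟩ := Finite.exists_le fun z : (Fin n → Bool) × (Fin m → Bool) => |u z.1 z.2|
  have hM' : ∀ x y, |u x y| ≤ M := fun x y => hM (x, y)
  have hM0 : 0 ≤ M := le_trans (abs_nonneg _) (hM' (fun _ => false) (fun _ => false))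
  have huniv : (Finset.univ : Finset ((Fin n → Bool) × (Fin m → Bool))).Nonempty :=
    Finset.univ_nonempty
  set δ : ℝ := Finset.univ.inf' huniv
    (fun z : (Fin n → Bool) × (Fin m → Bool) => e z.1 z.2) with hδdef
  have hδpos : 0 < δ := by
    rw [hδdef, Finset.lt_inf'_iff]
    exact fun z _ => he z.1 z.2
  have hδle : ∀ x y, δ ≤ e x y := fun x y =>
    Finset.inf'_le _ (Finset.mem_univ (x, y))
  have hnm : (0:ℝ) < (n:ℝ) + m := by
    have h1 : (1:ℝ) ≤ n := by exact_mod_cast hn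
    have h2 : (1:ℝ) ≤ m := by exact_mod_cast hm
    linarith
  set γ : ℝ := min (1/4) (δ / (8 * (M + 1) * ((n:ℝ) + m))) with hγdef
  have hγpos : 0 < γ := by
    apply lt_min (by norm_num)
    have hD : (0:ℝ) < 8 * (M + 1) * ((n:ℝ) + m) := by
      apply mul_pos (by linarith) hnm
    positivity
  have hγ14 : γ ≤ 1/4 := min_le_left _ _
  have hγδ : γ ≤ δ / (8 * (M + 1) * ((n:ℝ) + m)) := min_le_right _ _
  have hD : (0:ℝ) < 8 * (M + 1) * ((n:ℝ) + m) := mul_pos (by linarith) hnm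
  have h8 : γ * (8 * (M + 1) * ((n:ℝ) + m)) ≤ δ := (le_div_iff₀ hD).1 hγδ
  have herr : 2 * M * (((n:ℝ) + m) * γ) ≤ δ / 4 := by
    nlinarith [mul_nonneg hnm.le hγpos.le, hM0]
  refine ⟨γ, ⟨hγpos, by linarith⟩, ?_⟩
  intro p q hRQ hInt t₀ ht₀ hex
  obtain ⟨x, y, hNear⟩ := hex
  by_contra hcon
  push_neg at hcon
  have hnear_all : ∀ t, t₀ ≤ t → ∃ x' y', Near γ x' y' (p t) (q t) := by
    intro t ht
    rcases eq_or_lt_of_le ht with h | h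
    · exact ⟨x, y, h ▸ hNear⟩
    · exact hcon t h
  -- coordinates never hit 1/2 after t₀
  have hpc : ∀ i : Fin n, ContinuousOn (fun τ => p τ i) (Set.Ici t₀) := fun i τ hτ =>
    (hRQ.1 τ (le_trans ht₀ hτ) i).continuousAt.continuousWithinAt
  have hqc : ∀ j : Fin m, ContinuousOn (fun τ => q τ j) (Set.Ici t₀) := fun j τ hτ =>
    (hRQ.2 τ (le_trans ht₀ hτ) j).continuousAt.continuousWithinAt
  have hpne : ∀ i : Fin n, ∀ τ, t₀ ≤ τ → p τ i ≠ 1/2 := by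
    intro i τ hτ hhalf
    obtain ⟨x'', y'', hn''⟩ := hnear_all τ hτ
    have h := hn''.1 i
    cases hxi : x'' i <;> rw [hxi] at h <;> simp [coord] at h <;> linarith
  have hqne : ∀ j : Fin m, ∀ τ, t₀ ≤ τ → q τ j ≠ 1/2 := by
    intro j τ hτ hhalf
    obtain ⟨x'', y'', hn''⟩ := hnear_all τ hτ
    have h := hn''.2 j
    cases hyj : y'' j <;> rw [hyj] at h <;> simp [coord] at h <;> linarith
  -- the state stays near the SAME corner (x, y) forever
  have hnear_const : ∀ t, t₀ ≤ t →
      (∀ i, 1 - γ < coord (p t) i (x i)) ∧ (∀ j, 1 - γ < coord (q t) j (y j)) := by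
    intro t ht
    obtain ⟨x', y', hn'⟩ := hnear_all t ht
    have hxeq : ∀ i, x' i = x i := by
      intro i
      have hsg := sign_const (hpc i) (hpne i) t ht
      have ha := hNear.1 i
      have hb' := hn'.1 i
      by_contra hne'
      have hxx : x' i = !(x i) := Bool.eq_not_of_ne hne'
      rw [hxx] at hb'
      cases hxi : x i with
      | false =>
        rw [hxi] at ha hb'
        simp only [Bool.not_false] at hb'
        simp [coord] at ha hb'
        have : 1/2 < p t i := hsg.2 (by linarith)
        linarith
      | true =>
        rw [hxi] at ha hb'
        simp only [Bool.not_true] at hb'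
        simp [coord] at ha hb'
        have : 1/2 < p t₀ i := hsg.1 (by linarith)
        linarith
    have hyeq : ∀ j, y' j = y j := by
      intro j
      have hsg := sign_const (hqc j) (hqne j) t ht
      have ha := hNear.2 j
      have hb' := hn'.2 j
      by_contra hne'
      have hyy : y' j = !(y j) := Bool.eq_not_of_ne hne'
      rw [hyy] at hb'
      cases hyj : y j with
      | false =>
        rw [hyj] at ha hb'
        simp only [Bool.not_false] at hb'
        simp [coord] at ha hb'
        have : 1/2 < q t j := hsg.2 (by linarith)
        linarith
      | true =>
        rw [hyj] at ha hb'
        simp only [Bool.not_true] at hb'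
        simp [coord] at ha hb'
        have : 1/2 < q t₀ j := hsg.1 (by linarith)
        linarith
    constructor
    · intro i; have h := hn'.1 i; rwa [hxeq i] at h
    · intro j; have h := hn'.2 j; rwa [hyeq j] at h
  -- now use the no-Nash gap at (x, y)
  have hγ1 : γ ≤ 1 := by linarith
  rcases hprop x y with ⟨i, hi⟩ | ⟨j, hj⟩
  · -- team A has an improving deviation at gene i
    refine grow (s := fun t => coord (p t) i (!(x i)))
      (d := fun t => p t i * (1 - p t i) *
        (uhatA u (p t) (q t) i (!(x i)) - uhatA u (p t) (q t) i (x i)))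
      (c := δ/4) (t₀ := t₀) (by linarith) ?_ ?_ ?_ ?_
    · -- derivative
      intro t ht
      beta_reduce
      have h0t : 0 ≤ t := le_trans ht₀ ht
      have hder := hRQ.1 t h0t i
      have hsplit := uhat_split_p u (p t) (q t) i
      cases hxi : x i with
      | false =>
        simp only [Bool.not_false]
        have heq : (fun τ => coord (p τ) i true) = fun τ => 1 - p τ i := by
          funext τ; simp [coord]
        rw [heq]
        have hval : p t i * (1 - p t i) *
            (uhatA u (p t) (q t) i true - uhatA u (p t) (q t) i false)
            = -(p t i * (uhatA u (p t) (q t) i false - uhat u (p t) (q t))) := by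
          rw [hsplit]; ring
        rw [hval]
        exact hder.const_sub 1
      | true =>
        simp only [Bool.not_true]
        have heq : (fun τ => coord (p τ) i false) = fun τ => p τ i := by
          funext τ; simp [coord]
        rw [heq]
        have hval : p t i * (1 - p t i) *
            (uhatA u (p t) (q t) i false - uhatA u (p t) (q t) i true)
            = p t i * (uhatA u (p t) (q t) i false - uhat u (p t) (q t)) := by
          rw [hsplit]; ring
        rw [hval]
        exact hder
    · -- the differential inequality
      intro t ht
      beta_reduce
      have h0t : 0 ≤ t := le_trans ht₀ ht
      obtain ⟨hx_t, hy_t⟩ := hnear_const t ht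
      obtain ⟨hpI, hqI⟩ := hInt t h0t
      have h1 := (uhatA_close u hpI hqI hM' hγpos.le hγ1 hx_t hy_t i (x i)).trans herr
      have h2 := (uhatA_close u hpI hqI hM' hγpos.le hγ1 hx_t hy_t i (!(x i))).trans herr
      rw [Function.update_eq_self] at h1
      have hbf : Function.update x i (!(x i)) = bflip x i := rfl
      rw [hbf] at h2
      have hgap : δ/2 ≤ uhatA u (p t) (q t) i (!(x i)) - uhatA u (p t) (q t) i (x i) := by
        have h3 := abs_le.1 h1
        have h4 := abs_le.1 h2
        have h5 := hδle x y
        linarith [hi]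
      have hco := coord_Ioo (hpI i) (!(x i))
      have hsum := coord_add_not (p t) i (x i)
      have hxi := hx_t i
      have hprod : p t i * (1 - p t i)
          = coord (p t) i (!(x i)) * (1 - coord (p t) i (!(x i))) := by
        cases x i <;> simp [coord] <;> ring
      have h1s : (1:ℝ)/2 ≤ 1 - coord (p t) i (!(x i)) := by linarith
      have hfin : 0 ≤ coord (p t) i (!(x i)) *
          ((1 - coord (p t) i (!(x i))) *
            (uhatA u (p t) (q t) i (!(x i)) - uhatA u (p t) (q t) i (x i)) - δ/4) := by
        refine mul_nonneg hco.1.le ?_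
        have := mul_le_mul h1s hgap (by linarith) (by linarith)
        linarith
      rw [hprod]
      nlinarith [hfin]
    · exact (coord_Ioo ((hInt t₀ ht₀).1 i) (!(x i))).1
    · intro t ht
      exact (coord_Ioo ((hInt t (le_trans ht₀ ht)).1 i) (!(x i))).2
  · -- team B has an improving deviation at gene j
    refine grow (s := fun t => coord (q t) j (!(y j)))
      (d := fun t => q t j * (1 - q t j) *
        (uhatB u (p t) (q t) j (y j) - uhatB u (p t) (q t) j (!(y j))))
      (c := δ/4) (t₀ := t₀) (by linarith) ?_ ?_ ?_ ?_
    · intro t ht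
      beta_reduce
      have h0t : 0 ≤ t := le_trans ht₀ ht
      have hder := hRQ.2 t h0t j
      have hsplit := uhat_split_q u (p t) (q t) j
      cases hyj : y j with
      | false =>
        simp only [Bool.not_false]
        have heq : (fun τ => coord (q τ) j true) = fun τ => 1 - q τ j := by
          funext τ; simp [coord]
        rw [heq]
        have hval : q t j * (1 - q t j) *
            (uhatB u (p t) (q t) j false - uhatB u (p t) (q t) j true)
            = -(-(q t j * (uhatB u (p t) (q t) j false - uhat u (p t) (q t)))) := by
          rw [hsplit]; ring
        rw [hval]
        exact hder.const_sub 1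
      | true =>
        simp only [Bool.not_true]
        have heq : (fun τ => coord (q τ) j false) = fun τ => q τ j := by
          funext τ; simp [coord]
        rw [heq]
        have hval : q t j * (1 - q t j) *
            (uhatB u (p t) (q t) j true - uhatB u (p t) (q t) j false)
            = -(q t j * (uhatB u (p t) (q t) j false - uhat u (p t) (q t))) := by
          rw [hsplit]; ring
        rw [hval]
        exact hder
    · intro t ht
      beta_reduce
      have h0t : 0 ≤ t := le_trans ht₀ ht
      obtain ⟨hx_t, hy_t⟩ := hnear_const t ht
      obtain ⟨hpI, hqI⟩ := hInt t h0t
      have h1 := (uhatB_close u hpI hqI hM' hγpos.le hγ1 hx_t hy_t j (y j)).trans herr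
      have h2 := (uhatB_close u hpI hqI hM' hγpos.le hγ1 hx_t hy_t j (!(y j))).trans herr
      rw [Function.update_eq_self] at h1
      have hbf : Function.update y j (!(y j)) = bflip y j := rfl
      rw [hbf] at h2
      have hgap : δ/2 ≤ uhatB u (p t) (q t) j (y j) - uhatB u (p t) (q t) j (!(y j)) := by
        have h3 := abs_le.1 h1
        have h4 := abs_le.1 h2
        have h5 := hδle x y
        linarith [hj]
      have hco := coord_Ioo (hqI j) (!(y j))
      have hsum := coord_add_not (q t) j (y j)
      have hyj := hy_t j
      have hprod : q t j * (1 - q t j)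
          = coord (q t) j (!(y j)) * (1 - coord (q t) j (!(y j))) := by
        cases y j <;> simp [coord] <;> ring
      have h1s : (1:ℝ)/2 ≤ 1 - coord (q t) j (!(y j)) := by linarith
      have hfin : 0 ≤ coord (q t) j (!(y j)) *
          ((1 - coord (q t) j (!(y j))) *
            (uhatB u (p t) (q t) j (y j) - uhatB u (p t) (q t) j (!(y j))) - δ/4) := by
        refine mul_nonneg hco.1.le ?_
        have := mul_le_mul h1s hgap (by linarith) (by linarith)
        linarith
      rw [hprod]
      nlinarith [hfin]
    · exact (coord_Ioo ((hInt t₀ ht₀).2 j) (!(y j))).1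
    · intro t ht
      exact (coord_Ioo ((hInt t (le_trans ht₀ ht)).2 j) (!(y j))).2
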